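/- Every field k with a Hausdorff ring topology is rigid: for every set X, every continuous k-linear functional on k^X (product topology) is of the form f ↦ Σ_x p(x) f(x) for a unique finitely supported p : X →₀ k. -/

import Mathlib

/-!
A continuous functional `ℓ` on `k^X` sends some basic neighbourhood of `0`, constraining only
finitely many coordinates `S`, into the open set `{1}ᶜ`. Any `f` vanishing on `S` can be rescaled
inside that neighbourhood, so `ℓ f = 0`; hence `ℓ` only sees `f|_S`, and
`ℓ f = ∑_{x ∈ S} ℓ(δ_x) f(x)`. Uniqueness follows by testing against the `δ_x`.
-/

open Filter Topology

theorem ContinuousLinearMap.exists_finset_forall_eq_zero {k X : Type*} [DivisionRing k]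
    [TopologicalSpace k] [T1Space k] (ℓ : (X → k) →L[k] k) :
    ∃ S : Finset X, ∀ f : X → k, (∀ x ∈ S, f x = 0) → ℓ f = 0 := by
  have hne : ℓ ⁻¹' {1}ᶜ ∈ 𝓝 (0 : X → k) :=
    ℓ.continuous.continuousAt.preimage_mem_nhds <| by
      simp [isOpen_compl_singleton.mem_nhds, zero_ne_one]
  rw [nhds_pi, Filter.mem_pi'] at hne
  obtain ⟨S, t, ht, hsub⟩ := hne
  refine ⟨S, fun f hf => by_contra fun hℓf => ?_⟩
  have hmem : (ℓ f)⁻¹ • f ∈ (S : Set X).pi t := fun x hx => by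
    simpa [hf x hx] using mem_of_mem_nhds (ht x)
  exact hsub hmem (by simp [inv_mul_cancel₀ hℓf])

theorem LinearMap.apply_eq_sum_of_forall_eq_zero {k X : Type*} [CommRing k] [DecidableEq X]
    (ℓ : (X → k) →ₗ[k] k) {S : Finset X} (hS : ∀ f : X → k, (∀ x ∈ S, f x = 0) → ℓ f = 0)
    (f : X → k) : ℓ f = ∑ x ∈ S, ℓ (Pi.single x 1) * f x := by
  have hrest : ℓ (f - ∑ x ∈ S, f x • Pi.single x 1) = 0 := hS _ fun x hx => by
    simp [Finset.sum_apply, Pi.single_apply, hx]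
  rw [map_sub, sub_eq_zero] at hrest
  simp [hrest, map_sum, mul_comm]

theorem Finsupp.sum_mul_pi_single_one {k X : Type*} [Semiring k] [DecidableEq X]
    (p : X →₀ k) (x : X) :
    (p.sum fun z c => c * (Pi.single x 1 : X → k) z) = p x := by
  simp [Pi.single_apply]

theorem stmt5_general (k X : Type*) [Field k] [TopologicalSpace k] [T2Space k]
    (ℓ : (X → k) →L[k] k) :
    ∃! p : X →₀ k, ∀ f, ℓ f = p.sum fun x c => c * f x := by
  classical
  obtain ⟨S, hS⟩ := ℓ.exists_finset_forall_eq_zero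
  let p : X →₀ k := Finsupp.onFinset S (fun x => if x ∈ S then ℓ (Pi.single x 1) else 0)
    fun x hx => by_contra fun hxS => hx (if_neg hxS)
  have hp : ∀ f, ℓ f = p.sum fun x c => c * f x := fun f => by
    rw [Finsupp.onFinset_sum _ fun _ => zero_mul _]
    exact (ℓ.toLinearMap.apply_eq_sum_of_forall_eq_zero hS f).trans
      (Finset.sum_congr rfl fun x hx => by simp [hx])
  refine ⟨p, hp, fun q hq => Finsupp.ext fun x => ?_⟩
  have hqx := hq (Pi.single x 1)
  rwa [Finsupp.sum_mul_pi_single_one, hp, Finsupp.sum_mul_pi_single_one, eq_comm] at hqx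

/-- Every field with a Hausdorff ring topology is rigid: every continuous linear
functional on `k^X` is `f ↦ Σ_x p x * f x` for a unique finitely supported `p`. -/
theorem stmt5 (k X : Type*) [Field k] [TopologicalSpace k] [IsTopologicalRing k] [T2Space k]
    (ℓ : (X → k) →L[k] k) :
    ∃! p : X →₀ k, ∀ f, ℓ f = p.sum fun x c => c * f x :=
  stmt5_general k X ℓ
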